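/- Subject Reduction for automata policies: if N is a coherent system, ⊢N:ok (with DFA well-formedness), and N → N', then N' is coherent and ⊢N':ok. -/
import Mathlib


universe u

/-! ## Basic framework: trust levels, agents, membranes, systems -/

/-- Trust levels: `loc` (unknown), `lgood`, `lbad`. -/
inductive TrustLev : Type where
  | loc : TrustLev
  | lgood : TrustLev
  | lbad : TrustLev
deriving DecidableEq

/-- The subtyping order `<:` on trust levels: it is reflexive and satisfies
`loc <: lgood` and `loc <: lbad`. -/
def TrustLev.sub (t1 t2 : TrustLev) : Prop := t1 = t2 ∨ t1 = TrustLev.loc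

/-- Agents, parametric on the type `Act` of basic actions, the type `Loc` of
localities, and the type `Pol` of policies (digests carried by `go`). -/
inductive Agent (Act Loc : Type) (Pol : Type u) where
  | nil : Agent Act Loc Pol
  | act : Act → Agent Act Loc Pol → Agent Act Loc Pol
  | go : Loc → Pol → Agent Act Loc Pol → Agent Act Loc Pol
  | par : Agent Act Loc Pol → Agent Act Loc Pol → Agent Act Loc Pol
  | repl : Agent Act Loc Pol → Agent Act Loc Pol

/-- A membrane: a trust function on localities together with a policy.
(The partial trust function is modelled as a total function, the level `loc`
standing for ``unknown''.) -/
structure Membrane (Loc : Type) (Pol : Type u) where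
  trust : Loc → TrustLev
  pol : Pol

/-- Systems: the empty system, a site `l[M]{P}`, or a parallel composition. -/
inductive System (Act Loc : Type) (Pol : Type u) where
  | empty : System Act Loc Pol
  | site : Loc → Membrane Loc Pol → Agent Act Loc Pol → System Act Loc Pol
  | par : System Act Loc Pol → System Act Loc Pol → System Act Loc Pol

variable {Act Loc : Type} {Pol : Type u}

/-- The list of sites (name and membrane) occurring in a system. -/
def System.sites : System Act Loc Pol → List (Loc × Membrane Loc Pol)
  | System.empty => []
  | System.site l M _ => [(l, M)]
  | System.par N1 N2 => N1.sites ++ N2.sites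

/-- A site named `l` with membrane `M` is trustworthy if `M_t(l) = lgood`. -/
def Trustworthy (l : Loc) (M : Membrane Loc Pol) : Prop :=
  M.trust l = TrustLev.lgood

/-- A system is coherent if `M^k_t(l) <: M^l_t(l)` for every trustworthy site `k`
and every site `l` of the system. -/
def Coherent (N : System Act Loc Pol) : Prop :=
  ∀ p ∈ N.sites, Trustworthy p.1 p.2 →
    ∀ q ∈ N.sites, TrustLev.sub (p.2.trust q.1) (q.2.trust q.1)

/-- `SiteIn l M P N` holds when the site `l[M]{P}` occurs in the system `N`. -/
inductive SiteIn (l : Loc) (M : Membrane Loc Pol) (P : Agent Act Loc Pol) :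
    System Act Loc Pol → Prop where
  | here : SiteIn l M P (System.site l M P)
  | left {N1 N2} : SiteIn l M P N1 → SiteIn l M P (System.par N1 N2)
  | right {N1 N2} : SiteIn l M P N2 → SiteIn l M P (System.par N1 N2)

/-- Structural equivalence on agents: `|` is commutative and associative with
unit `nil`, replication unfolds, and `≡` is a congruence for `|`. -/
inductive AgEq : Agent Act Loc Pol → Agent Act Loc Pol → Prop where
  | refl (P) : AgEq P P
  | symm {P Q} : AgEq P Q → AgEq Q P
  | trans {P Q R} : AgEq P Q → AgEq Q R → AgEq P R
  | parNil (P) : AgEq (Agent.par P Agent.nil) P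
  | parComm (P Q) : AgEq (Agent.par P Q) (Agent.par Q P)
  | parAssoc (P Q R) :
      AgEq (Agent.par (Agent.par P Q) R) (Agent.par P (Agent.par Q R))
  | replUnfold (P Q) :
      AgEq (Agent.par (Agent.repl P) Q) (Agent.par P (Agent.par (Agent.repl P) Q))
  | parCong {P P' Q Q'} : AgEq P P' → AgEq Q Q' → AgEq (Agent.par P Q) (Agent.par P' Q')

/-- Structural equivalence on systems. -/
inductive StrEq : System Act Loc Pol → System Act Loc Pol → Prop where
  | refl (N) : StrEq N N
  | symm {N1 N2} : StrEq N1 N2 → StrEq N2 N1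
  | trans {N1 N2 N3} : StrEq N1 N2 → StrEq N2 N3 → StrEq N1 N3
  | parEmpty (N) : StrEq (System.par N System.empty) N
  | parComm (N1 N2) : StrEq (System.par N1 N2) (System.par N2 N1)
  | parAssoc (N1 N2 N3) :
      StrEq (System.par (System.par N1 N2) N3) (System.par N1 (System.par N2 N3))
  | parCong {N1 N1' N2 N2'} :
      StrEq N1 N1' → StrEq N2 N2' → StrEq (System.par N1 N2) (System.par N1' N2')
  | site (l M) {P Q} : AgEq P Q → StrEq (System.site l M P) (System.site l M Q)

/-- The reduction relation over systems, parametric on the `enforces`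
relation `enf` between policies and on the typechecking relation `typ`
between agents and policies.  In rule `mig`, if the target site `l` trusts
the source site `k` then the digest `T` is checked against `l`'s policy,
otherwise the full code `P` is typechecked. -/
inductive Red (enf : Pol → Pol → Prop) (typ : Agent Act Loc Pol → Pol → Prop) :
    System Act Loc Pol → System Act Loc Pol → Prop where
  | act (l M a P Q) :
      Red enf typ (System.site l M (Agent.par (Agent.act a P) Q))
        (System.site l M (Agent.par P Q))
  | par {N1 N1'} (N2) :
      Red enf typ N1 N1' → Red enf typ (System.par N1 N2) (System.par N1' N2)
  | struct {N N1 N1' N'} :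
      StrEq N N1 → Red enf typ N1 N1' → StrEq N1' N' → Red enf typ N N'
  | mig (k Mk l Ml T P Q R) :
      (if Ml.trust k = TrustLev.lgood then enf T Ml.pol else typ P Ml.pol) →
      Red enf typ
        (System.par (System.site k Mk (Agent.par (Agent.go l T P) Q))
          (System.site l Ml R))
        (System.par (System.site k Mk Q) (System.site l Ml (Agent.par P R)))

/-- The labelled transition system over agents, with labels in `Act ⊕ Loc`. -/
inductive Step : Agent Act Loc Pol → (Act ⊕ Loc) → Agent Act Loc Pol → Prop where
  | act (a P) : Step (Agent.act a P) (Sum.inl a) P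
  | mig (l T P) : Step (Agent.go l T P) (Sum.inr l) Agent.nil
  | repl {P α P'} :
      Step (Agent.par P (Agent.repl P)) α P' → Step (Agent.repl P) α P'
  | parL {P1 α P1'} (P2) :
      Step P1 α P1' → Step (Agent.par P1 P2) α (Agent.par P1' P2)
  | parR {P1 α P1'} (P2) :
      Step P1 α P1' → Step (Agent.par P2 P1) α (Agent.par P2 P1')

/-- `Trace P σ P'` means `P →σ P'`: the composite of the single steps of `σ`. -/
inductive Trace : Agent Act Loc Pol → List (Act ⊕ Loc) → Agent Act Loc Pol → Prop where
  | nil (P) : Trace P [] P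
  | cons {P α P' σ P''} : Step P α P' → Trace P' σ P'' → Trace P (α :: σ) P''

/-- The thread components of an agent: every agent is `P1 | ... | Pn`
with each `Pi` a thread (not itself a parallel composition). -/
def Agent.comps : Agent Act Loc Pol → List (Agent Act Loc Pol)
  | Agent.par P Q => P.comps ++ Q.comps
  | P => [P]

/-- A thread is an agent which is not a parallel composition. -/
def Agent.IsThread : Agent Act Loc Pol → Prop
  | Agent.par _ _ => False
  | _ => True

/-! ## Concurrent regular expressions and their languages -/

/-- Concurrent regular expressions over an alphabet `α`:
`ε`, characters, concatenation, shuffle `⊙` and shuffle closure `^⊗`. -/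
inductive CRE (α : Type) : Type where
  | eps : CRE α
  | char : α → CRE α
  | seq : CRE α → CRE α → CRE α
  | shuffle : CRE α → CRE α → CRE α
  | shuffleStar : CRE α → CRE α

/-- The shuffle (interleaving) of two languages:
`{x1 y1 ⋯ xn yn : x1⋯xn ∈ L1, y1⋯yn ∈ L2}` (the factors may be empty). -/
def shuffleLang {α : Type} (L1 L2 : Language α) : Language α :=
  {w | ∃ ps : List (List α × List α),
      w = (ps.map fun p => p.1 ++ p.2).flatten ∧
      (ps.map Prod.fst).flatten ∈ L1 ∧ (ps.map Prod.snd).flatten ∈ L2}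

/-- `n`-fold shuffle of a language with itself. -/
def shufflePow {α : Type} (L : Language α) : ℕ → Language α
  | 0 => {[]}
  | n + 1 => shuffleLang (shufflePow L n) L

/-- The language of a concurrent regular expression. -/
def CRE.lang {α : Type} : CRE α → Language α
  | CRE.eps => {[]}
  | CRE.char a => {[a]}
  | CRE.seq e1 e2 => {w | ∃ x ∈ e1.lang, ∃ y ∈ e2.lang, w = x ++ y}
  | CRE.shuffle e1 e2 => shuffleLang e1.lang e2.lang
  | CRE.shuffleStar e => ⋃ n, shufflePow e.lang n

/-- The concurrent regular expression associated to an agent: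
`CRE(nil)=ε`, `CRE(a.P)=a.CRE(P)`, `CRE(go(l,A).P)=l`,
`CRE(P|Q)=CRE(P)⊙CRE(Q)`, `CRE(!P)=CRE(P)^⊗`. -/
def Agent.cre : Agent Act Loc Pol → CRE (Act ⊕ Loc)
  | Agent.nil => CRE.eps
  | Agent.act a P => CRE.seq (CRE.char (Sum.inl a)) P.cre
  | Agent.go l _ _ => CRE.char (Sum.inr l)
  | Agent.par P Q => CRE.shuffle P.cre Q.cre
  | Agent.repl P => CRE.shuffleStar P.cre

/-! ## DFA policies -/

/-- A DFA policy: a deterministic finite automaton over the alphabet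
`Act ⊕ Loc`, with a finite state set, a nonempty set of accepting states,
and minimal (all states reachable and pairwise distinguishable). -/
structure DFAPol (Act Loc : Type) : Type 1 where
  State : Type
  fin : Finite State
  dfa : DFA (Act ⊕ Loc) State
  acc_nonempty : dfa.accept.Nonempty
  reachable : ∀ s : State, ∃ σ : List (Act ⊕ Loc), dfa.evalFrom dfa.start σ = s
  distinguishable : ∀ s t : State,
      (∀ σ, dfa.evalFrom s σ ∈ dfa.accept ↔ dfa.evalFrom t σ ∈ dfa.accept) → s = t

/-- `Acp_s(A)`: the words leading `A` from state `s` to a final state. -/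
def DFAPol.Acp {Act Loc : Type} (A : DFAPol Act Loc) (s : A.State) :
    Language (Act ⊕ Loc) :=
  {σ | A.dfa.evalFrom s σ ∈ A.dfa.accept}

/-- `Acp(A) = Acp_{s0}(A)`. -/
def DFAPol.AcpStart {Act Loc : Type} (A : DFAPol Act Loc) : Language (Act ⊕ Loc) :=
  A.Acp A.dfa.start

/-- `A1` enforces `A2` iff `Acp(A1) ≤ Acp(A2)`. -/
def DFAPol.Enforces {Act Loc : Type} (A1 A2 : DFAPol Act Loc) : Prop :=
  A1.AcpStart ≤ A2.AcpStart

/-- `GoOk P` holds iff every subagent of `P` of the form `go(l,A').Q`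
satisfies `⊢ Q : A'`. -/
def GoOk : Agent Act Loc (DFAPol Act Loc) → Prop
  | Agent.nil => True
  | Agent.act _ P => GoOk P
  | Agent.go _ A' Q => Q.cre.lang ≤ A'.AcpStart ∧ GoOk Q
  | Agent.par P Q => GoOk P ∧ GoOk Q
  | Agent.repl P => GoOk P

/-- DFA satisfaction `⊢ P : A`: `lang(CRE(P)) ≤ Acp(A)` and `⊢ Q : A'` for
every subagent of `P` of the form `go(l,A').Q`. -/
def DSat (P : Agent Act Loc (DFAPol Act Loc)) (A : DFAPol Act Loc) : Prop :=
  P.cre.lang ≤ A.AcpStart ∧ GoOk P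

/-- Well-formedness of systems for DFA policies: at a trustworthy site, each
thread component `Pi` of the resident code satisfies
`lang(CRE(Pi)) ≤ Acp_s(M_p)` for some state `s` (and its migrating subagents
conform to their digests). -/
inductive OkA : System Act Loc (DFAPol Act Loc) → Prop where
  | empty : OkA System.empty
  | par {N1 N2} : OkA N1 → OkA N2 → OkA (System.par N1 N2)
  | siteU {l M P} : ¬ Trustworthy l M → OkA (System.site l M P)
  | siteG {l M P} :
      Trustworthy l M →
      (∀ Pi ∈ Agent.comps P,
        ∃ s : M.pol.State, Pi.cre.lang ≤ M.pol.Acp s ∧ GoOk Pi) →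
      OkA (System.site l M P)

/-! ## Auxiliary lemmas -/

/-- Inductive characterization of shuffling two words. -/
inductive Sh {α : Type} : List α → List α → List α → Prop where
  | nil : Sh [] [] []
  | left {x y w : List α} (a : α) : Sh x y w → Sh (a :: x) y (a :: w)
  | right {x y w : List α} (a : α) : Sh x y w → Sh x (a :: y) (a :: w)

lemma Sh.nil_left {α : Type} (y : List α) : Sh [] y y := by
  induction y with
  | nil => exact Sh.nil
  | cons a y ih => exact Sh.right a ih

lemma Sh.nil_right {α : Type} (x : List α) : Sh x [] x := by
  induction x with
  | nil => exact Sh.nil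
  | cons a x ih => exact Sh.left a ih

lemma Sh.append_left {α : Type} {x y w : List α} (u : List α) (h : Sh x y w) :
    Sh (u ++ x) y (u ++ w) := by
  induction u with
  | nil => exact h
  | cons a u ih => exact Sh.left a ih

lemma Sh.append_right {α : Type} {x y w : List α} (u : List α) (h : Sh x y w) :
    Sh x (u ++ y) (u ++ w) := by
  induction u with
  | nil => exact h
  | cons a u ih => exact Sh.right a ih

lemma Sh.app_left {α : Type} (x y : List α) : Sh x y (x ++ y) := by
  simpa using Sh.append_left x (Sh.nil_left y)

lemma Sh.app_right {α : Type} (x y : List α) : Sh x y (y ++ x) := by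
  simpa using Sh.append_right y (Sh.nil_right x)

lemma Sh.exists_ps {α : Type} {x y w : List α} (h : Sh x y w) :
    ∃ ps : List (List α × List α),
      w = (ps.map fun p => p.1 ++ p.2).flatten ∧
      (ps.map Prod.fst).flatten = x ∧ (ps.map Prod.snd).flatten = y := by
  induction h with
  | nil => exact ⟨[], rfl, rfl, rfl⟩
  | left a _ ih =>
    obtain ⟨ps, hw, hx, hy⟩ := ih
    exact ⟨([a], []) :: ps, by simp [hw], by simp [hx], by simp [hy]⟩
  | right a _ ih =>
    obtain ⟨ps, hw, hx, hy⟩ := ih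
    exact ⟨([], [a]) :: ps, by simp [hw], by simp [hx], by simp [hy]⟩

lemma mem_shuffleLang_of_sh {α : Type} {L1 L2 : Language α} {x y w : List α}
    (hx : x ∈ L1) (hy : y ∈ L2) (h : Sh x y w) : w ∈ shuffleLang L1 L2 := by
  obtain ⟨ps, hw, hx', hy'⟩ := h.exists_ps
  exact ⟨ps, hw, hx' ▸ hx, hy' ▸ hy⟩

lemma CRE.lang_nonempty {α : Type} (e : CRE α) : e.lang.Nonempty := by
  induction e with
  | eps => exact ⟨[], rfl⟩
  | char a => exact ⟨[a], rfl⟩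
  | seq e1 e2 ih1 ih2 =>
    obtain ⟨x, hx⟩ := ih1; obtain ⟨y, hy⟩ := ih2
    exact ⟨x ++ y, x, hx, y, hy, rfl⟩
  | shuffle e1 e2 ih1 ih2 =>
    obtain ⟨x, hx⟩ := ih1; obtain ⟨y, hy⟩ := ih2
    exact ⟨x ++ y, mem_shuffleLang_of_sh hx hy (Sh.app_left x y)⟩
  | shuffleStar e ih =>
    exact ⟨[], Set.mem_iUnion.mpr ⟨0, rfl⟩⟩

lemma DFAPol.acp_of_shuffle_left {A : DFAPol Act Loc} {L1 L2 : Language (Act ⊕ Loc)}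
    {s : A.State} (h : shuffleLang L1 L2 ≤ A.Acp s) {y : List (Act ⊕ Loc)}
    (hy : y ∈ L2) : L1 ≤ A.Acp (A.dfa.evalFrom s y) := by
  intro x hx
  have hm : y ++ x ∈ shuffleLang L1 L2 := mem_shuffleLang_of_sh hx hy (Sh.app_right x y)
  have := h hm
  simpa [DFAPol.Acp, DFA.evalFrom_of_append] using this

lemma DFAPol.acp_of_shuffle_right {A : DFAPol Act Loc} {L1 L2 : Language (Act ⊕ Loc)}
    {s : A.State} (h : shuffleLang L1 L2 ≤ A.Acp s) {x : List (Act ⊕ Loc)}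
    (hx : x ∈ L1) : L2 ≤ A.Acp (A.dfa.evalFrom s x) := by
  intro y hy
  have hm : x ++ y ∈ shuffleLang L1 L2 := mem_shuffleLang_of_sh hx hy (Sh.app_left x y)
  have := h hm
  simpa [DFAPol.Acp, DFA.evalFrom_of_append] using this

/-- Per-thread well-formedness of the code at a site with policy `A`. -/
def SiteOk (A : DFAPol Act Loc) (P : Agent Act Loc (DFAPol Act Loc)) : Prop :=
  ∀ Pi ∈ P.comps, ∃ s, Pi.cre.lang ≤ A.Acp s ∧ GoOk Pi

lemma comps_ok {A : DFAPol Act Loc} (P : Agent Act Loc (DFAPol Act Loc)) :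
    ∀ s : A.State, P.cre.lang ≤ A.Acp s → GoOk P → SiteOk A P := by
  induction P with
  | par P1 P2 ih1 ih2 =>
    intro s h hgo Pi hPi
    obtain ⟨hg1, hg2⟩ := hgo
    have h' : shuffleLang P1.cre.lang P2.cre.lang ≤ A.Acp s := h
    obtain ⟨y, hy⟩ := CRE.lang_nonempty P2.cre
    obtain ⟨x, hx⟩ := CRE.lang_nonempty P1.cre
    have hA1 := DFAPol.acp_of_shuffle_left h' hy
    have hA2 := DFAPol.acp_of_shuffle_right h' hx
    simp only [Agent.comps, List.mem_append] at hPi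
    rcases hPi with hPi | hPi
    · exact ih1 _ hA1 hg1 Pi hPi
    · exact ih2 _ hA2 hg2 Pi hPi
  | nil =>
    intro s h hgo Pi hPi
    simp only [Agent.comps, List.mem_singleton] at hPi
    subst hPi; exact ⟨s, h, hgo⟩
  | act a P ih =>
    intro s h hgo Pi hPi
    simp only [Agent.comps, List.mem_singleton] at hPi
    subst hPi; exact ⟨s, h, hgo⟩
  | go l T P ih =>
    intro s h hgo Pi hPi
    simp only [Agent.comps, List.mem_singleton] at hPi
    subst hPi; exact ⟨s, h, hgo⟩
  | repl P ih =>
    intro s h hgo Pi hPi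
    simp only [Agent.comps, List.mem_singleton] at hPi
    subst hPi; exact ⟨s, h, hgo⟩

lemma siteOk_par {A : DFAPol Act Loc} {P Q : Agent Act Loc (DFAPol Act Loc)} :
    SiteOk A (Agent.par P Q) ↔ SiteOk A P ∧ SiteOk A Q := by
  unfold SiteOk
  rw [show (Agent.par P Q).comps = P.comps ++ Q.comps from rfl, List.forall_mem_append]

lemma siteOk_nil {A : DFAPol Act Loc} :
    SiteOk A (Agent.nil : Agent Act Loc (DFAPol Act Loc)) := by
  obtain ⟨s, hs⟩ := A.acc_nonempty
  intro Pi hPi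
  simp only [Agent.comps, List.mem_singleton] at hPi
  subst hPi
  refine ⟨s, ?_, trivial⟩
  intro w hw
  have hw' : w = [] := hw
  subst hw'
  simpa [DFAPol.Acp, DFA.evalFrom_nil] using hs

lemma lang_le_star {α : Type} (e : CRE α) : e.lang ≤ (CRE.shuffleStar e).lang := by
  intro w hw
  have h1 : w ∈ shufflePow e.lang 1 :=
    mem_shuffleLang_of_sh rfl hw (Sh.nil_left w)
  exact Set.mem_iUnion.mpr ⟨1, h1⟩

lemma siteOk_of_repl {A : DFAPol Act Loc} {P : Agent Act Loc (DFAPol Act Loc)}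
    (h : SiteOk A (Agent.repl P)) : SiteOk A P := by
  obtain ⟨s, hl, hg⟩ := h (Agent.repl P) (by simp [Agent.comps])
  have hP : P.cre.lang ≤ A.Acp s := fun w hw => hl (lang_le_star P.cre hw)
  exact comps_ok P s hP hg

lemma agEq_siteOk {A : DFAPol Act Loc} {P Q : Agent Act Loc (DFAPol Act Loc)}
    (h : AgEq P Q) : SiteOk A P ↔ SiteOk A Q := by
  induction h with
  | refl _ => exact Iff.rfl
  | symm _ ih => exact ih.symm
  | trans _ _ ih1 ih2 => exact ih1.trans ih2
  | parNil P => rw [siteOk_par]; exact ⟨fun h => h.1, fun h => ⟨h, siteOk_nil⟩⟩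
  | parComm P Q => rw [siteOk_par, siteOk_par]; exact and_comm
  | parAssoc P Q R => rw [siteOk_par, siteOk_par, siteOk_par, siteOk_par]; exact and_assoc
  | replUnfold P Q =>
    rw [siteOk_par, siteOk_par, siteOk_par]
    constructor
    · rintro ⟨h1, h2⟩; exact ⟨siteOk_of_repl h1, h1, h2⟩
    · rintro ⟨_, h1, h2⟩; exact ⟨h1, h2⟩
  | parCong _ _ ih1 ih2 => rw [siteOk_par, siteOk_par]; exact and_congr ih1 ih2

lemma okA_par_iff {N1 N2 : System Act Loc (DFAPol Act Loc)} :
    OkA (System.par N1 N2) ↔ OkA N1 ∧ OkA N2 := by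
  constructor
  · intro h; cases h with | par h1 h2 => exact ⟨h1, h2⟩
  · rintro ⟨h1, h2⟩; exact OkA.par h1 h2

lemma okA_site_iff {l : Loc} {M : Membrane Loc (DFAPol Act Loc)}
    {P : Agent Act Loc (DFAPol Act Loc)} :
    OkA (System.site l M P) ↔ (Trustworthy l M → SiteOk M.pol P) := by
  constructor
  · intro h ht
    cases h with
    | siteU h' => exact absurd ht h'
    | siteG _ h2 => exact h2
  · intro h
    by_cases ht : Trustworthy l M
    · exact OkA.siteG ht (h ht)
    · exact OkA.siteU ht

lemma strEq_okA {N N' : System Act Loc (DFAPol Act Loc)} (h : StrEq N N') :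
    OkA N ↔ OkA N' := by
  induction h with
  | refl _ => exact Iff.rfl
  | symm _ ih => exact ih.symm
  | trans _ _ ih1 ih2 => exact ih1.trans ih2
  | parEmpty N => rw [okA_par_iff]; exact ⟨fun h => h.1, fun h => ⟨h, OkA.empty⟩⟩
  | parComm N1 N2 => rw [okA_par_iff, okA_par_iff]; exact and_comm
  | parAssoc N1 N2 N3 =>
    rw [okA_par_iff, okA_par_iff, okA_par_iff, okA_par_iff]; exact and_assoc
  | parCong _ _ ih1 ih2 => rw [okA_par_iff, okA_par_iff]; exact and_congr ih1 ih2
  | site l M hPQ =>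
    rw [okA_site_iff, okA_site_iff]; exact imp_congr Iff.rfl (agEq_siteOk hPQ)

lemma strEq_sites {N N' : System Act Loc Pol} (h : StrEq N N') :
    ∀ p, p ∈ N.sites ↔ p ∈ N'.sites := by
  induction h with
  | refl _ => exact fun p => Iff.rfl
  | symm _ ih => exact fun p => (ih p).symm
  | trans _ _ ih1 ih2 => exact fun p => (ih1 p).trans (ih2 p)
  | parEmpty N => intro p; simp [System.sites]
  | parComm N1 N2 =>
    intro p; simp only [System.sites, List.mem_append]; exact or_comm
  | parAssoc N1 N2 N3 =>
    intro p; simp only [System.sites, List.mem_append]; exact or_assoc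
  | parCong _ _ ih1 ih2 =>
    intro p; simp only [System.sites, List.mem_append, ih1 p, ih2 p]
  | site l M _ => exact fun p => Iff.rfl

lemma coherent_of_mem_iff {N N' : System Act Loc Pol}
    (h : ∀ p, p ∈ N.sites ↔ p ∈ N'.sites) (hc : Coherent N) : Coherent N' := by
  intro p hp ht q hq
  exact hc p ((h p).mpr hp) ht q ((h q).mpr hq)

lemma red_sites {enf : Pol → Pol → Prop} {typ : Agent Act Loc Pol → Pol → Prop}
    {N N' : System Act Loc Pol} (h : Red enf typ N N') :
    ∀ p, p ∈ N.sites ↔ p ∈ N'.sites := by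
  induction h with
  | act l M a P Q => exact fun p => Iff.rfl
  | par N2 hr ih => intro p; simp only [System.sites, List.mem_append, ih p]
  | struct h1 _ h2 ih =>
    exact fun p => ((strEq_sites h1 p).trans (ih p)).trans (strEq_sites h2 p)
  | mig k Mk l Ml T P Q R hc => exact fun p => Iff.rfl

lemma coherent_par_left {N1 N2 : System Act Loc Pol}
    (h : Coherent (System.par N1 N2)) : Coherent N1 := by
  intro p hp ht q hq
  refine h p ?_ ht q ?_ <;> simp only [System.sites, List.mem_append] <;>
    [exact Or.inl hp; exact Or.inl hq]

lemma red_okA {N N' : System Act Loc (DFAPol Act Loc)}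
    (h : Red DFAPol.Enforces DSat N N') :
    Coherent N → OkA N → OkA N' := by
  induction h with
  | act l M a P Q =>
    intro _ hok
    rw [okA_site_iff] at hok ⊢
    intro ht
    have hS := hok ht
    rw [siteOk_par] at hS ⊢
    obtain ⟨h1, h2⟩ := hS
    refine ⟨?_, h2⟩
    obtain ⟨s, hl, hg⟩ := h1 (Agent.act a P) (by simp [Agent.comps])
    have hP : P.cre.lang ≤ M.pol.Acp (M.pol.dfa.evalFrom s [Sum.inl a]) := by
      intro w hw
      have hm : [Sum.inl a] ++ w ∈ (CRE.seq (CRE.char (Sum.inl a)) P.cre).lang :=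
        ⟨[Sum.inl a], rfl, w, hw, rfl⟩
      have := hl hm
      simpa [DFAPol.Acp, DFA.evalFrom_of_append] using this
    exact comps_ok P _ hP hg
  | par N2 hr ih =>
    intro hcoh hok
    rw [okA_par_iff] at hok ⊢
    exact ⟨ih (coherent_par_left hcoh) hok.1, hok.2⟩
  | struct h1 hr h2 ih =>
    intro hcoh hok
    have hc1 := coherent_of_mem_iff (strEq_sites h1) hcoh
    have ho1 := (strEq_okA h1).mp hok
    exact (strEq_okA h2).mp (ih hc1 ho1)
  | mig k Mk l Ml T P Q R hcheck =>
    intro hcoh hok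
    rw [okA_par_iff] at hok ⊢
    obtain ⟨hk, hl⟩ := hok
    constructor
    · rw [okA_site_iff]
      intro ht
      have hS := okA_site_iff.mp hk ht
      rw [siteOk_par] at hS
      exact hS.2
    · rw [okA_site_iff]
      intro ht
      rw [siteOk_par]
      refine ⟨?_, okA_site_iff.mp hl ht⟩
      have hDS : P.cre.lang ≤ Ml.pol.AcpStart ∧ GoOk P := by
        by_cases hg : Ml.trust k = TrustLev.lgood
        · rw [if_pos hg] at hcheck
          have hmemL : ((l, Ml) : Loc × Membrane Loc (DFAPol Act Loc)) ∈
              (System.par (System.site k Mk (Agent.par (Agent.go l T P) Q))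
                (System.site l Ml R)).sites := by
            simp [System.sites]
          have hmemK : ((k, Mk) : Loc × Membrane Loc (DFAPol Act Loc)) ∈
              (System.par (System.site k Mk (Agent.par (Agent.go l T P) Q))
                (System.site l Ml R)).sites := by
            simp [System.sites]
          have hsub := hcoh (l, Ml) hmemL ht (k, Mk) hmemK
          have hkt : Trustworthy k Mk := by
            rcases hsub with h' | h'
            · show Mk.trust k = TrustLev.lgood
              rw [← h']; exact hg
            · rw [hg] at h'; simp at h'
          have hSk := okA_site_iff.mp hk hkt
          rw [siteOk_par] at hSk
          obtain ⟨s, _, hgo⟩ := hSk.1 (Agent.go l T P) (by simp [Agent.comps])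
          obtain ⟨hgo1, hgo2⟩ := hgo
          exact ⟨le_trans hgo1 hcheck, hgo2⟩
        · rw [if_neg hg] at hcheck
          exact hcheck
      exact comps_ok P Ml.pol.dfa.start hDS.1 hDS.2

/-- **Subject Reduction for automata policies**: if `N` is a coherent system,
`⊢ N : ok` (with DFA well-formedness), and `N → N'`, then `N'` is coherent and
`⊢ N' : ok`. -/
theorem subject_reduction_dfa
    {N N' : System Act Loc (DFAPol Act Loc)}
    (hcoh : Coherent N) (hok : OkA N)
    (hred : Red DFAPol.Enforces DSat N N') :
    Coherent N' ∧ OkA N' := by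
  exact ⟨coherent_of_mem_iff (red_sites hred) hcoh, red_okA hred hcoh hok⟩
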